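/- Let X be a compact metric space and (μ_i)_{i∈ℕ} a sequence of Borel probability measures on X. Suppose that for each i there are Borel probability measures (ν_{i,k})_{k∈ℕ} and closed sets K_{i,k} ⊆ X such that ∫ φ dν_{i,k} → ∫ φ dμ_i as k → ∞ for every continuous φ : X → ℝ, ν_{i,k}(X∖K_{i,k}) = 0, and μ_i(K_{i,k}) = 0. Let S be any set of Borel probability measures on X containing all the ν_{i,k}. Then the set {φ ∈ C(X,ℝ) : for every i there exists ν ∈ S with ∫ φ dν > ∫ φ dμ_i} is comeagre (residual) in C(X,ℝ) with the uniform topology. -/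

import Mathlib

open MeasureTheory Filter Topology Set

/-! Given `φ` and `ε`, pick `k` with `∫ φ dν_{i,k}` close to `∫ φ dμ_i`, and add to `φ` a small
multiple of an Urysohn function equal to `1` on `K_{i,k}` and supported in an open set of small
`μ_i`-measure: this raises `∫ φ dν_{i,k}` by the full amount but `∫ φ dμ_i` by at most half of it.
Hence `{φ | ∃ k, ∫ φ dμ_i < ∫ φ dν_{i,k}}` is dense, and it is open since integration against a
finite measure is continuous for the sup norm. Intersecting over `i` gives a residual set. -/

namespace ContinuousMap

variable {X E : Type*} [TopologicalSpace X] [CompactSpace X] [MeasurableSpace X] [BorelSpace X]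

theorem integrable (μ : Measure X) [IsFiniteMeasure μ] (φ : C(X, ℝ)) :
    Integrable (fun x => φ x) μ :=
  (BoundedContinuousFunction.mkOfCompact φ).integrable μ

theorem continuous_integral [NormedAddCommGroup E] [NormedSpace ℝ E] [CompleteSpace E]
    [SecondCountableTopologyEither X E] (μ : Measure X) [IsFiniteMeasure μ] :
    Continuous fun φ : C(X, E) => ∫ x, φ x ∂μ := by
  have hL1 : (fun φ : C(X, E) => ∫ x, φ x ∂μ) = fun φ => L1.integral (toLp 1 μ ℝ φ) := by
    funext φ
    rw [L1.integral_eq_integral]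
    exact integral_congr_ae (coeFn_toLp μ φ).symm
  rw [hL1]
  exact L1.continuous_integral.comp (toLp 1 μ ℝ).continuous

end ContinuousMap

theorem exists_continuous_eqOn_one_integral_lt {X : Type*} [TopologicalSpace X] [NormalSpace X]
    [MeasurableSpace X] [OpensMeasurableSpace X] (μ : Measure X) [IsFiniteMeasure μ]
    [μ.OuterRegular] {K : Set X} (hK : IsClosed K) (hμK : μ K = 0) {δ : ℝ} (hδ : 0 < δ) :
    ∃ g : C(X, ℝ), EqOn g 1 K ∧ (∀ x, g x ∈ Icc (0 : ℝ) 1) ∧ ∫ x, g x ∂μ < δ := by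
  obtain ⟨V, hKV, hVopen, hμV⟩ :=
    K.exists_isOpen_lt_of_lt (ENNReal.ofReal δ) (by rwa [hμK, ENNReal.ofReal_pos])
  obtain ⟨g, hg0, hg1, hg01⟩ := exists_continuous_zero_one_of_isClosed hVopen.isClosed_compl hK
    (disjoint_compl_left_iff_subset.2 hKV)
  refine ⟨g, hg1, hg01, ?_⟩
  calc ∫ x, g x ∂μ ≤ ∫ x, V.indicator 1 x ∂μ := by
        refine integral_mono_of_nonneg (.of_forall fun x => (hg01 x).1)
          ((integrable_const 1).indicator hVopen.measurableSet) (.of_forall fun x => ?_)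
        by_cases hx : x ∈ V
        · simpa [hx] using (hg01 x).2
        · simp [hx, hg0 hx]
    _ = μ.real V := integral_indicator_one hVopen.measurableSet
    _ < δ := ENNReal.toReal_lt_of_lt_ofReal hμV

section WeakApproximation

variable {X ι : Type*} [TopologicalSpace X] [CompactSpace X] [MeasurableSpace X] [BorelSpace X]

theorem isOpen_setOf_exists_integral_lt (μ : Measure X) [IsFiniteMeasure μ] (ν : ι → Measure X)
    [∀ k, IsFiniteMeasure (ν k)] :
    IsOpen {φ : C(X, ℝ) | ∃ k, ∫ x, φ x ∂μ < ∫ x, φ x ∂ν k} := by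
  simp only [ofPred_exists]
  exact isOpen_iUnion fun k =>
    isOpen_lt (ContinuousMap.continuous_integral μ) (ContinuousMap.continuous_integral (ν k))

theorem dense_setOf_exists_integral_lt [NormalSpace X] {l : Filter ι} [l.NeBot]
    (μ : Measure X) [IsProbabilityMeasure μ] [μ.OuterRegular]
    (ν : ι → Measure X) [∀ k, IsProbabilityMeasure (ν k)] (K : ι → Set X)
    (hK : ∀ k, IsClosed (K k))
    (hconv : ∀ φ : C(X, ℝ), Tendsto (fun k => ∫ x, φ x ∂ν k) l (𝓝 (∫ x, φ x ∂μ)))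
    (hνK : ∀ k, ν k (K k)ᶜ = 0) (hμK : ∀ k, μ (K k) = 0) :
    Dense {φ : C(X, ℝ) | ∃ k, ∫ x, φ x ∂μ < ∫ x, φ x ∂ν k} := by
  refine Metric.dense_iff.2 fun φ ε hε => ?_
  set c := ε / 2
  obtain ⟨k, hk⟩ :=
    ((hconv φ).eventually (Metric.ball_mem_nhds _ (by positivity : 0 < c / 2))).exists
  obtain ⟨g, hg1, hg01, hgμ⟩ := exists_continuous_eqOn_one_integral_lt μ (hK k) (hμK k) one_half_pos
  have hg_norm : ‖g‖ ≤ 1 := (g.norm_le zero_le_one).2 fun x => by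
    rw [Real.norm_of_nonneg (hg01 x).1]; exact (hg01 x).2
  have hgν : ∫ x, g x ∂ν k = 1 := by
    have hae : ∀ᵐ x ∂ν k, g x = 1 := measure_eq_zero_iff_ae_notMem.1 (hνK k) |>.mono
      fun x hx => hg1 (not_not.1 hx)
    simp [integral_congr_ae hae]
  have hintegral (m : Measure X) [IsFiniteMeasure m] :
      ∫ x, (φ + c • g) x ∂m = ∫ x, φ x ∂m + c * ∫ x, g x ∂m := by
    simp only [ContinuousMap.add_apply, ContinuousMap.smul_apply, smul_eq_mul]
    rw [integral_add (φ.integrable m) ((g.integrable m).const_mul c), integral_const_mul]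
  refine ⟨φ + c • g, ?_, k, ?_⟩
  · rw [Metric.mem_ball, dist_eq_norm, add_sub_cancel_left]
    calc ‖c • g‖ ≤ c * 1 := by
          rw [norm_smul, Real.norm_of_nonneg (by positivity)]; gcongr
      _ < ε := by rw [mul_one]; exact half_lt_self hε
  · have hclose := abs_lt.1 (Real.dist_eq _ _ ▸ Metric.mem_ball.1 hk)
    have hgμ' : c * ∫ x, g x ∂μ < c * (1 / 2) := mul_lt_mul_of_pos_left hgμ (by positivity)
    rw [hintegral, hintegral, hgν]
    linarith

end WeakApproximation

theorem stmt_12_general {X : Type*} [MetricSpace X] [CompactSpace X]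
    [MeasurableSpace X] [BorelSpace X]
    (μ : ℕ → Measure X) (hμprob : ∀ i, IsProbabilityMeasure (μ i))
    (ν : ℕ → ℕ → Measure X) (hνprob : ∀ i k, IsProbabilityMeasure (ν i k))
    (K : ℕ → ℕ → Set X) (hKcl : ∀ i k, IsClosed (K i k))
    (hconv : ∀ i : ℕ, ∀ φ : C(X, ℝ), Filter.Tendsto
      (fun k : ℕ => ∫ x, φ x ∂(ν i k)) Filter.atTop (nhds (∫ x, φ x ∂(μ i))))
    (hνK : ∀ i k, (ν i k) (K i k)ᶜ = 0) (hμK : ∀ i k, (μ i) (K i k) = 0)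
    (S : Set (Measure X))
    (hS : ∀ i k, ν i k ∈ S) :
    {φ : C(X, ℝ) | ∀ i : ℕ, ∃ m ∈ S, (∫ x, φ x ∂(μ i)) < ∫ x, φ x ∂m}
      ∈ residual C(X, ℝ) := by
  have hresidual (i : ℕ) : {φ : C(X, ℝ) | ∃ k, ∫ x, φ x ∂μ i < ∫ x, φ x ∂ν i k} ∈ residual _ :=
    residual_of_dense_open (isOpen_setOf_exists_integral_lt (μ i) (ν i))
      (dense_setOf_exists_integral_lt (μ i) (ν i) (K i) (hKcl i) (hconv i) (hνK i) (hμK i))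
  refine mem_of_superset (countable_iInter_mem.2 hresidual) fun φ hφ i => ?_
  obtain ⟨k, hk⟩ := mem_iInter.1 hφ i
  exact ⟨ν i k, hS i k, hk⟩

/-- If each measure `μ_i` of a countable family of Borel
probability measures is weakly approximated by Borel probability measures
`ν_{i,k}`, each carried by a closed set of `μ_i`-measure zero, and `S` is any
set of Borel probability measures containing all the `ν_{i,k}`, then the set
of continuous potentials `φ` such that for every `i` some `ν ∈ S` has
`∫ φ dν > ∫ φ dμ_i` is comeagre (residual) in `C(X,ℝ)`. -/
theorem stmt_12 {X : Type*} [MetricSpace X] [CompactSpace X]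
    [MeasurableSpace X] [BorelSpace X]
    (μ : ℕ → Measure X) (hμprob : ∀ i, IsProbabilityMeasure (μ i))
    (ν : ℕ → ℕ → Measure X) (hνprob : ∀ i k, IsProbabilityMeasure (ν i k))
    (K : ℕ → ℕ → Set X) (hKcl : ∀ i k, IsClosed (K i k))
    (hconv : ∀ i : ℕ, ∀ φ : C(X, ℝ), Filter.Tendsto
      (fun k : ℕ => ∫ x, φ x ∂(ν i k)) Filter.atTop (nhds (∫ x, φ x ∂(μ i))))
    (hνK : ∀ i k, (ν i k) (K i k)ᶜ = 0) (hμK : ∀ i k, (μ i) (K i k) = 0)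
    (S : Set (Measure X)) (hSprob : ∀ m ∈ S, IsProbabilityMeasure m)
    (hS : ∀ i k, ν i k ∈ S) :
    {φ : C(X, ℝ) | ∀ i : ℕ, ∃ m ∈ S, (∫ x, φ x ∂(μ i)) < ∫ x, φ x ∂m}
      ∈ residual C(X, ℝ) :=
  stmt_12_general μ hμprob ν hνprob K hKcl hconv hνK hμK S hS
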